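/- Any product of an odd number of prefix transpositions of Cantor space can be rewritten as a product of an even number of prefix transpositions: for incomparable finite binary words α ⊥ β, the map t_{α,β} equals the product of the two transpositions t_{α0,β0} and t_{α1,β1}; consequently every element of the group generated by all prefix transpositions is a product of an even number of such transpositions. -/
import Mathlib


/-- Finite binary words. -/
abbrev Word := List Bool
/-- Cantor space `{0,1}^ℕ`. -/
abbrev Cantor := ℕ → Bool

/-- `x` has the finite word `α` as a prefix. -/
def hasPrefix (α : Word) (x : Cantor) : Prop :=
  ∀ i, i < α.length → x i = α.getD i false

instance (α : Word) (x : Cantor) : Decidable (hasPrefix α x) :=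
  Nat.decidableBallLT _ _

/-- Concatenate a finite word with an infinite sequence. -/
def wcat (α : Word) (y : Cantor) : Cantor :=
  fun n => if n < α.length then α.getD n false else y (n - α.length)

/-- The prefix transposition `t_{α,β}` of Cantor space. -/
def t (α β : Word) (x : Cantor) : Cantor :=
  if hasPrefix α x then wcat β (fun n => x (n + α.length))
  else if hasPrefix β x then wcat α (fun n => x (n + β.length))
  else x

/-- `α ⊥ β`: neither word is a prefix of the other. -/
def Incomp (α β : Word) : Prop := ¬ α <+: β ∧ ¬ β <+: α

/-- The basic clopen set `μ𝔠` of sequences with prefix `μ`. -/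
def prefSet (μ : Word) : Set Cantor := {x | hasPrefix μ x}

lemma t_pos {α β : Word} {x : Cantor} (ha : hasPrefix α x) :
    t α β x = wcat β (fun n => x (n + α.length)) := by
  rw [t, if_pos ha]

lemma t_neg_pos {α β : Word} {x : Cantor} (ha : ¬ hasPrefix α x) (hb : hasPrefix β x) :
    t α β x = wcat α (fun n => x (n + β.length)) := by
  rw [t, if_neg ha, if_pos hb]

lemma t_neg_neg {α β : Word} {x : Cantor} (ha : ¬ hasPrefix α x) (hb : ¬ hasPrefix β x) :
    t α β x = x := by
  rw [t, if_neg ha, if_neg hb]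

-- L2
lemma hasPrefix_mono {α β : Word} {x : Cantor} (h : α <+: β) (hx : hasPrefix β x) :
    hasPrefix α x := by
  intro i hi
  obtain ⟨s, rfl⟩ := h
  rw [hx i (by simp; omega)]
  rw [List.getD_eq_getElem _ _ hi, List.getD_eq_getElem _ _ (by simp; omega)]
  simp [List.getElem_append_left hi]

-- prefix of concat
lemma prefix_of_prefix_concat {α β : Word} {c : Bool} (h : α <+: β ++ [c])
    (hl : α.length ≤ β.length) : α <+: β := by
  rw [List.prefix_iff_eq_take] at h ⊢
  rwa [List.take_append_of_le_length hl] at h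

-- L3
lemma comparable_of_hasPrefix {α β : Word} {x : Cantor} (ha : hasPrefix α x)
    (hb : hasPrefix β x) : α <+: β ∨ β <+: α := by
  rcases le_total α.length β.length with h | h
  · left
    rw [List.prefix_iff_eq_take]
    apply List.ext_getElem (by simp; omega)
    intro i h1 h2
    have := (ha i (by omega)).symm.trans (hb i (by omega))
    rw [List.getD_eq_getElem _ _ (by omega), List.getD_eq_getElem _ _ (by omega)] at this
    simpa using this
  · right
    rw [List.prefix_iff_eq_take]
    apply List.ext_getElem (by simp; omega)
    intro i h1 h2
    have := (hb i (by omega)).symm.trans (ha i (by omega))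
    rw [List.getD_eq_getElem _ _ (by omega), List.getD_eq_getElem _ _ (by omega)] at this
    simpa using this

-- L4
lemma Incomp.concat {α β : Word} (h : Incomp α β) (b c : Bool) :
    Incomp (α ++ [b]) (β ++ [c]) := by
  constructor
  · intro hp
    have hl : α.length ≤ β.length := by
      have := hp.length_le; simp at this; omega
    exact h.1 (prefix_of_prefix_concat (((α.prefix_append [b]).trans hp)) hl)
  · intro hp
    have hl : β.length ≤ α.length := by
      have := hp.length_le; simp at this; omega
    exact h.2 (prefix_of_prefix_concat (((β.prefix_append [c]).trans hp)) hl)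

-- L1
lemma hasPrefix_concat_iff {α : Word} {b : Bool} {x : Cantor} :
    hasPrefix (α ++ [b]) x ↔ hasPrefix α x ∧ x α.length = b := by
  constructor
  · intro h
    refine ⟨hasPrefix_mono (α.prefix_append [b]) h, ?_⟩
    have := h α.length (by simp)
    rw [List.getD_eq_getElem _ _ (by simp), List.getElem_append_right (le_refl _)] at this
    simpa using this
  · rintro ⟨h, hb⟩ i hi
    simp only [List.length_append, List.length_singleton] at hi
    rcases lt_or_ge i α.length with h' | h'
    · rw [h i h', List.getD_eq_getElem _ _ h', List.getD_eq_getElem _ _ (by simp; omega),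
        List.getElem_append_left h']
    · have : i = α.length := by omega
      subst this
      rw [hb, List.getD_eq_getElem _ _ (by simp), List.getElem_append_right (le_refl _)]
      simp

-- L5
lemma hasPrefix_wcat (α : Word) (y : Cantor) : hasPrefix α (wcat α y) := by
  intro i hi; simp [wcat, hi]

-- L9
lemma wcat_shift (α : Word) (y : Cantor) :
    (fun n => wcat α y (n + α.length)) = y := by
  funext n; simp [wcat]

-- L8
lemma wcat_of_hasPrefix {α : Word} {x : Cantor} (h : hasPrefix α x) :
    wcat α (fun n => x (n + α.length)) = x := by
  funext n
  simp only [wcat]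
  split
  · exact (h n (by omega)).symm
  · congr 1; omega

-- wcat eval at position |β|
lemma wcat_at_length {β : Word} {b : Bool} (z : Cantor) :
    wcat (β ++ [b]) z β.length = b := by
  simp only [wcat, List.length_append, List.length_singleton]
  rw [if_pos (by omega), List.getD_eq_getElem _ _ (by simp),
    List.getElem_append_right (le_refl _)]
  simp

-- L10
lemma wcat_concat {β : Word} {b : Bool} {y : Cantor} (hy : y 0 = b) :
    wcat (β ++ [b]) (fun n => y (n + 1)) = wcat β y := by
  funext n
  simp only [wcat, List.length_append, List.length_singleton]
  rcases lt_trichotomy n β.length with h | h | h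
  · rw [if_pos (by omega), if_pos h, List.getD_eq_getElem _ _ (by simp; omega),
      List.getD_eq_getElem _ _ (by omega), List.getElem_append_left h]
  · subst h
    rw [if_pos (by omega), if_neg (by omega), List.getD_eq_getElem _ _ (by simp),
      List.getElem_append_right (le_refl _)]
    simpa using hy.symm
  · rw [if_neg (by omega), if_neg (by omega)]
    congr 1; omega

lemma not_hasPrefix_both {α β : Word} (h : Incomp α β) {x : Cantor}
    (ha : hasPrefix α x) (hb : hasPrefix β x) : False := by
  rcases comparable_of_hasPrefix ha hb with h' | h'
  exacts [h.1 h', h.2 h']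

-- L7
lemma t_invol {α β : Word} (h : Incomp α β) : t α β ∘ t α β = id := by
  funext x
  simp only [Function.comp, id]
  by_cases ha : hasPrefix α x
  · rw [t_pos ha, t_neg_pos (fun h' => not_hasPrefix_both h h' (hasPrefix_wcat _ _))
      (hasPrefix_wcat _ _), wcat_shift, wcat_of_hasPrefix ha]
  · by_cases hb : hasPrefix β x
    · rw [t_neg_pos ha hb, t_pos (hasPrefix_wcat _ _), wcat_shift, wcat_of_hasPrefix hb]
    · rw [t_neg_neg ha hb, t_neg_neg ha hb]

theorem part1 (α β : Word) (h : Incomp α β) :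
    t α β = t (α ++ [false]) (β ++ [false]) ∘ t (α ++ [true]) (β ++ [true]) := by
  funext x
  simp only [Function.comp]
  by_cases ha : hasPrefix α x
  · have hnb : ¬ hasPrefix β x := fun hb => not_hasPrefix_both h ha hb
    by_cases hxa : x α.length = true
    · -- b = true
      set w := wcat (β ++ [true]) (fun n => x (n + (α ++ [true]).length)) with hw
      have hwb : hasPrefix (β ++ [true]) w := hasPrefix_wcat _ _
      have hn1 : ¬ hasPrefix (α ++ [false]) w := by
        intro h'
        rcases comparable_of_hasPrefix h' hwb with h'' | h''
        exacts [(h.concat false true).1 h'', (h.concat false true).2 h'']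
      have hn2 : ¬ hasPrefix (β ++ [false]) w := by
        rw [hasPrefix_concat_iff]
        rintro ⟨_, h'⟩
        rw [hw, wcat_at_length] at h'
        exact absurd h' (by simp)
      rw [t_pos ha, t_pos (hasPrefix_concat_iff.mpr ⟨ha, hxa⟩), ← hw, t_neg_neg hn1 hn2, hw]
      have : (fun n => x (n + (α ++ [true]).length)) =
          (fun n => (fun m => x (m + α.length)) (n + 1)) := by
        funext n; simp; ring_nf
      rw [this, wcat_concat (y := fun m => x (m + α.length)) (by simpa using hxa)]
    · -- b = false
      have hxa' : x α.length = false := by simpa using hxa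
      have h1 : ¬ hasPrefix (α ++ [true]) x := by
        rw [hasPrefix_concat_iff]; rintro ⟨_, h'⟩; exact hxa h'
      have h2 : ¬ hasPrefix (β ++ [true]) x :=
        fun h' => hnb (hasPrefix_mono (β.prefix_append [true]) h')
      rw [t_pos ha, t_neg_neg h1 h2, t_pos (hasPrefix_concat_iff.mpr ⟨ha, hxa'⟩)]
      have : (fun n => x (n + (α ++ [false]).length)) =
          (fun n => (fun m => x (m + α.length)) (n + 1)) := by
        funext n; simp; ring_nf
      rw [this, wcat_concat (y := fun m => x (m + α.length)) (by simpa using hxa')]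
  · by_cases hb : hasPrefix β x
    · have h1 : ¬ hasPrefix (α ++ [true]) x :=
        fun h' => ha (hasPrefix_mono (α.prefix_append [true]) h')
      have h3 : ¬ hasPrefix (α ++ [false]) x :=
        fun h' => ha (hasPrefix_mono (α.prefix_append [false]) h')
      by_cases hxb : x β.length = true
      · -- b = true
        set w := wcat (α ++ [true]) (fun n => x (n + (β ++ [true]).length)) with hw
        have hwa : hasPrefix (α ++ [true]) w := hasPrefix_wcat _ _
        have hn1 : ¬ hasPrefix (α ++ [false]) w := by
          rw [hasPrefix_concat_iff]
          rintro ⟨_, h'⟩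
          rw [hw, wcat_at_length] at h'
          exact absurd h' (by simp)
        have hn2 : ¬ hasPrefix (β ++ [false]) w := by
          intro h'
          rcases comparable_of_hasPrefix h' hwa with h'' | h''
          exacts [(h.concat true false).2 h'', (h.concat true false).1 h'']
        rw [t_neg_pos ha hb, t_neg_pos h1 (hasPrefix_concat_iff.mpr ⟨hb, hxb⟩), ← hw,
          t_neg_neg hn1 hn2, hw]
        have : (fun n => x (n + (β ++ [true]).length)) =
            (fun n => (fun m => x (m + β.length)) (n + 1)) := by
          funext n; simp; ring_nf
        rw [this, wcat_concat (y := fun m => x (m + β.length)) (by simpa using hxb)]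
      · -- b = false
        have hxb' : x β.length = false := by simpa using hxb
        have h2 : ¬ hasPrefix (β ++ [true]) x := by
          rw [hasPrefix_concat_iff]; rintro ⟨_, h'⟩; exact hxb h'
        rw [t_neg_pos ha hb, t_neg_neg h1 h2,
          t_neg_pos h3 (hasPrefix_concat_iff.mpr ⟨hb, hxb'⟩)]
        have : (fun n => x (n + (β ++ [false]).length)) =
            (fun n => (fun m => x (m + β.length)) (n + 1)) := by
          funext n; simp; ring_nf
        rw [this, wcat_concat (y := fun m => x (m + β.length)) (by simpa using hxb')]
    · have h1 : ¬ hasPrefix (α ++ [true]) x :=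
        fun h' => ha (hasPrefix_mono (α.prefix_append [true]) h')
      have h2 : ¬ hasPrefix (β ++ [true]) x :=
        fun h' => hb (hasPrefix_mono (β.prefix_append [true]) h')
      have h3 : ¬ hasPrefix (α ++ [false]) x :=
        fun h' => ha (hasPrefix_mono (α.prefix_append [false]) h')
      have h4 : ¬ hasPrefix (β ++ [false]) x :=
        fun h' => hb (hasPrefix_mono (β.prefix_append [false]) h')
      rw [t_neg_neg h1 h2, t_neg_neg h3 h4, t_neg_neg ha hb]

def permT (α β : Word) (h : Incomp α β) : Equiv.Perm Cantor :=
  ⟨t α β, t α β, congrFun (t_invol h), congrFun (t_invol h)⟩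

@[simp] lemma permT_coe (α β : Word) (h : Incomp α β) : ⇑(permT α β h) = t α β := rfl

lemma self_inv {f : Equiv.Perm Cantor} {α β : Word} (h : Incomp α β) (hf : ⇑f = t α β) :
    f⁻¹ = f := by
  rw [inv_eq_iff_mul_eq_one]
  apply Equiv.coe_fn_injective
  show ⇑(f * f) = ⇑(1 : Equiv.Perm Cantor)
  rw [Equiv.Perm.coe_mul, hf, t_invol h, Equiv.Perm.coe_one]

theorem stmt19 :
    (∀ α β : Word, Incomp α β →
        t α β = t (α ++ [false]) (β ++ [false]) ∘ t (α ++ [true]) (β ++ [true])) ∧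
      ∀ g ∈ Subgroup.closure
          {e : Equiv.Perm Cantor | ∃ α β : Word, Incomp α β ∧ ⇑e = t α β},
        ∃ l : List (Equiv.Perm Cantor),
          (∀ f ∈ l, ∃ α β : Word, Incomp α β ∧ ⇑f = t α β) ∧
            Even l.length ∧ l.prod = g := by
  refine ⟨part1, ?_⟩
  intro g hg
  induction hg using Subgroup.closure_induction with
  | mem e he =>
      obtain ⟨α, β, hab, he⟩ := he
      refine ⟨[permT _ _ (hab.concat false false), permT _ _ (hab.concat true true)],
        ?_, ⟨1, rfl⟩, ?_⟩
      · rintro f hf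
        rcases List.mem_pair.mp hf with rfl | rfl
        · exact ⟨_, _, hab.concat false false, rfl⟩
        · exact ⟨_, _, hab.concat true true, rfl⟩
      · apply Equiv.coe_fn_injective
        have : ⇑(permT _ _ (hab.concat false false) * permT _ _ (hab.concat true true)) =
            t (α ++ [false]) (β ++ [false]) ∘ t (α ++ [true]) (β ++ [true]) := rfl
        simp only [List.prod_cons, List.prod_nil, mul_one, this, he, ← part1 α β hab]
  | one => exact ⟨[], by simp, ⟨0, rfl⟩, rfl⟩
  | mul a b _ _ iha ihb =>
      obtain ⟨l1, h1, e1, p1⟩ := iha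
      obtain ⟨l2, h2, e2, p2⟩ := ihb
      refine ⟨l1 ++ l2, ?_, ?_, ?_⟩
      · intro f hf
        rcases List.mem_append.mp hf with hf | hf
        exacts [h1 f hf, h2 f hf]
      · simpa using e1.add e2
      · rw [List.prod_append, p1, p2]
  | inv a _ iha =>
      obtain ⟨l, h1, e1, p1⟩ := iha
      refine ⟨(l.map fun x => x⁻¹).reverse, ?_, ?_, ?_⟩
      · intro f hf
        simp only [List.mem_reverse, List.mem_map] at hf
        obtain ⟨f', hf', rfl⟩ := hf
        obtain ⟨α, β, hab, hc⟩ := h1 f' hf'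
        exact ⟨α, β, hab, by rw [self_inv hab hc, hc]⟩
      · simpa using e1
      · rw [← List.prod_inv_reverse, p1]
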